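/- arXiv:1712.09155 — 8 statements merged into one kernel-verified Lean document; each statement's English description precedes it below -/
import Mathlib

section
/- For a fixed positive integer b, a lattice point (r,s) ∈ ℕ×ℕ (with r,s ≥ 1) lying on the curve y = n·x^b for some rational n is b-visible (i.e., no other positive integer lattice point lies on the graph of f(x)=n·x^b strictly between (0,0) and (r,s)) if and only if there is no prime p with p ∣ r and p^b ∣ s. -/
/-- Proposition 1: a point `(r,s)` on the curve `y = n x^b` is `b`-visible iff
no prime `p` satisfies `p ∣ r` and `p^b ∣ s`. Visibility is encoded by the
nonexistence of another positive lattice point `(r', s')` on the same curve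
strictly between the origin and `(r,s)` (i.e. `s' * r^b = s * r'^b` with `r' < r`). -/
theorem stmt0 (b r s : ℕ) (hb : 1 ≤ b) (hr : 1 ≤ r) (hs : 1 ≤ s) :
    (¬ ∃ r' s' : ℕ, 1 ≤ r' ∧ r' < r ∧ 1 ≤ s' ∧ s' * r ^ b = s * r' ^ b) ↔
      ¬ ∃ p : ℕ, p.Prime ∧ p ∣ r ∧ p ^ b ∣ s := by
  apply not_congr
  constructor
  · rintro ⟨r', s', h1, h2, h3, h4⟩
    set d := Nat.gcd r r' with hd
    have hdr : d ∣ r := Nat.gcd_dvd_left r r'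
    have hdr' : d ∣ r' := Nat.gcd_dvd_right r r'
    have hd0 : 0 < d := Nat.gcd_pos_of_pos_left _ (by omega)
    set m := r / d with hm
    set m' := r' / d with hm'
    have hrm : r = d * m := (Nat.div_mul_cancel hdr).symm.trans (mul_comm _ _)
    have hrm' : r' = d * m' := (Nat.div_mul_cancel hdr').symm.trans (mul_comm _ _)
    have hcop : Nat.Coprime m m' := Nat.coprime_div_gcd_div_gcd hd0
    have hmlt : m' < m := Nat.div_lt_div_of_lt_of_dvd hdr h2
    have hm'1 : 1 ≤ m' := Nat.one_le_div_iff hd0 |>.2 (Nat.le_of_dvd (by omega) hdr')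
    have hm2 : 2 ≤ m := by omega
    -- cancel d^b
    have key : s' * m ^ b = s * m' ^ b := by
      have h5 : s' * m ^ b * d ^ b = s * m' ^ b * d ^ b := by
        rw [hrm, hrm'] at h4
        ring_nf at h4 ⊢
        linarith [h4]
      exact Nat.eq_of_mul_eq_mul_right (Nat.pow_pos (n := b) hd0) h5
    have hdvd : m ^ b ∣ s := by
      have : m ^ b ∣ s * m' ^ b := ⟨s', by linarith [key]⟩
      exact Nat.Coprime.dvd_of_dvd_mul_right (hcop.pow b b) this
    refine ⟨m.minFac, Nat.minFac_prime (by omega), dvd_trans m.minFac_dvd ⟨d, by rw [hrm, mul_comm]⟩,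
      dvd_trans (pow_dvd_pow_of_dvd m.minFac_dvd b) hdvd⟩
  · rintro ⟨p, hp, ⟨m, hm⟩, ⟨t, ht⟩⟩
    have hp2 := hp.two_le
    have hm1 : 1 ≤ m := by nlinarith
    refine ⟨m, t, hm1, by nlinarith, ?_, ?_⟩
    · have : 0 < p ^ b := pow_pos (by omega) b
      nlinarith
    · rw [hm, ht, mul_pow]; ring
end

section
/- Fix coprime positive integers a, b. A point (ℓ^a, s) with ℓ, s ≥ 1 is (b/a)-visible if and only if (ℓ, s) is b-visible; in number-theoretic terms, there is no pair (r', s') of positive integers with r' < ℓ^a and s'·(ℓ^a)^{b/a} = s·(r')^{b/a} if and only if there is no prime p with p ∣ ℓ and p^b ∣ s. -/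
/-- A point `(ℓ^a, s)` is `(b/a)`-visible iff `(ℓ, s)` is `b`-visible: there is no
positive integer point `((ℓ')^a, s')` with `(ℓ')^a < ℓ^a` on the same curve
(encoded by `s' * ℓ^b = s * (ℓ')^b`) iff there is no prime `p` with
`p ∣ ℓ` and `p^b ∣ s`. -/
theorem stmt2 (a b ℓ s : ℕ) (ha : 0 < a) (hb : 0 < b) (hab : Nat.gcd a b = 1)
    (hℓ : 1 ≤ ℓ) (hs : 1 ≤ s) :
    (¬ ∃ ℓ' s' : ℕ, 1 ≤ ℓ' ∧ ℓ' ^ a < ℓ ^ a ∧ 1 ≤ s' ∧ s' * ℓ ^ b = s * ℓ' ^ b) ↔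
      ¬ ∃ p : ℕ, p.Prime ∧ p ∣ ℓ ∧ p ^ b ∣ s := by
  rw [not_iff_not]
  constructor
  · rintro ⟨ℓ', s', hℓ', hlt, hs', heq⟩
    have hltℓ : ℓ' < ℓ := by
      by_contra h
      exact absurd (Nat.pow_le_pow_left (le_of_not_gt h) a) (not_le_of_gt hlt)
    set g := Nat.gcd ℓ ℓ' with hg
    have hg0 : 0 < g := Nat.gcd_pos_of_pos_right _ hℓ'
    have hgl : g ∣ ℓ := Nat.gcd_dvd_left _ _
    have hgr : g ∣ ℓ' := Nat.gcd_dvd_right _ _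
    have hm : ℓ / g ∣ ℓ := Nat.div_dvd_of_dvd hgl
    have hcop : Nat.Coprime (ℓ / g) (ℓ' / g) := Nat.coprime_div_gcd_div_gcd hg0
    have hℓeq : g * (ℓ / g) = ℓ := Nat.mul_div_cancel' hgl
    have hℓ'eq : g * (ℓ' / g) = ℓ' := Nat.mul_div_cancel' hgr
    have key : s' * (ℓ / g) ^ b = s * (ℓ' / g) ^ b := by
      have h1 : g ^ b * (s' * (ℓ / g) ^ b) = g ^ b * (s * (ℓ' / g) ^ b) := by
        calc g ^ b * (s' * (ℓ / g) ^ b) = s' * (g * (ℓ / g)) ^ b := by ring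
          _ = s * (g * (ℓ' / g)) ^ b := by rw [hℓeq, hℓ'eq]; exact heq
          _ = g ^ b * (s * (ℓ' / g) ^ b) := by ring
      exact Nat.eq_of_mul_eq_mul_left (pow_pos hg0 b) h1
    have hdvd : (ℓ / g) ^ b ∣ s * (ℓ' / g) ^ b := ⟨s', by rw [← key]; ring⟩
    have hmb : (ℓ / g) ^ b ∣ s :=
      Nat.Coprime.dvd_of_dvd_mul_right (hcop.pow b b) hdvd
    -- fix
    have hm1 : ℓ / g ≠ 1 := by
      intro h
      have hgeq : ℓ = g := by
        have := hℓeq; rw [h, mul_one] at this; omega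
      have := Nat.le_of_dvd hℓ' (hgeq ▸ hgr)
      omega
    obtain ⟨p, hp, hpm⟩ := Nat.exists_prime_and_dvd hm1
    exact ⟨p, hp, hpm.trans hm, dvd_trans (pow_dvd_pow_of_dvd hpm b) hmb⟩
  · rintro ⟨p, hp, hpl, hps⟩
    obtain ⟨m, rfl⟩ := hpl
    obtain ⟨t, rfl⟩ := hps
    have hp0 : 0 < p := hp.pos
    have hm0 : 0 < m := Nat.pos_of_ne_zero (by rintro rfl; simp at hℓ)
    have ht0 : 0 < t := Nat.pos_of_ne_zero (by rintro rfl; simp at hs)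
    refine ⟨m, t, hm0, Nat.pow_lt_pow_left ?_ (by omega), ht0, ?_⟩
    · calc m = 1 * m := (one_mul m).symm
        _ < p * m := (Nat.mul_lt_mul_right hm0).mpr hp.one_lt
    · ring
end

section
/- For a fixed positive integer b, a lattice point (r,s) ∈ ℕ×ℕ with r,s ≥ 1 is (−b)-visible from (∞,0) if and only if there is no prime p with p^b ∣ s; equivalently, iff s is b-th-power-free. -/
/-- Proposition 3: `(r,s)` is `(-b)`-visible from `(∞,0)` (no positive integer point
`(r',s')` with `r' > r` on the same curve `s' * (r')^b = s * r^b`) iff no prime `p`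
satisfies `p^b ∣ s`, i.e. iff `s` is `b`-th-power-free. -/
theorem stmt3 (b r s : ℕ) (hb : 1 ≤ b) (hr : 1 ≤ r) (hs : 1 ≤ s) :
    (¬ ∃ r' s' : ℕ, r < r' ∧ 1 ≤ s' ∧ s' * r' ^ b = s * r ^ b) ↔
      ∀ p : ℕ, p.Prime → ¬ p ^ b ∣ s := by
  constructor
  · intro h p hp hpb
    apply h
    refine ⟨r * p, s / p ^ b, ?_, ?_, ?_⟩
    · have : 2 ≤ p := hp.two_le
      exact (Nat.lt_mul_iff_one_lt_right (by omega)).mpr (by omega)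
    · have hp0 : 0 < p ^ b := pow_pos hp.pos b
      exact Nat.one_le_div_iff hp0 |>.mpr (Nat.le_of_dvd (by omega) hpb)
    · rw [mul_pow]
      rw [show s / p ^ b * (r ^ b * p ^ b) = s / p ^ b * p ^ b * r ^ b by ring]
      rw [Nat.div_mul_cancel hpb]
  · rintro h ⟨r', s', hrr, hs', heq⟩
    set g := Nat.gcd r r' with hg
    have hg0 : 0 < g := Nat.gcd_pos_of_pos_left _ (by omega)
    set u := r / g with hu
    set v := r' / g with hv
    have hru : r = g * u := (Nat.mul_div_cancel' (Nat.gcd_dvd_left r r')).symm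
    have hrv : r' = g * v := (Nat.mul_div_cancel' (Nat.gcd_dvd_right r r')).symm
    have hcop : Nat.Coprime u v := Nat.coprime_div_gcd_div_gcd hg0
    have huv : u < v := by
      have := hrr
      rw [hru, hrv] at this
      exact lt_of_mul_lt_mul_left this (Nat.zero_le g)
    have hu1 : 1 ≤ u := by
      rcases Nat.eq_zero_or_pos u with h0 | h1
      · rw [h0, mul_zero] at hru; omega
      · exact h1
    have hv2 : 2 ≤ v := by omega
    -- cancel g^b
    have key : s' * v ^ b = s * u ^ b := by
      have : s' * v ^ b * g ^ b = s * u ^ b * g ^ b := by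
        have := heq
        rw [hru, hrv] at this
        calc s' * v ^ b * g ^ b = s' * (g * v) ^ b := by ring
          _ = s * (g * u) ^ b := this
          _ = s * u ^ b * g ^ b := by ring
      exact Nat.eq_of_mul_eq_mul_right (pow_pos hg0 b) this
    have hdvd : v ^ b ∣ s := by
      have h1 : v ^ b ∣ s * u ^ b := ⟨s', by rw [← key]; ring⟩
      exact (Nat.Coprime.dvd_of_dvd_mul_right (Nat.Coprime.pow _ _ hcop.symm) h1)
    obtain ⟨p, hp, hpv⟩ := Nat.exists_prime_and_dvd (by omega : v ≠ 1)
    exact h p hp ((pow_dvd_pow_of_dvd hpv b).trans hdvd)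
end

section
/- Fix a positive integer b. The natural density of b-visible lattice points is 1/ζ(b+1): the proportion of pairs (r,s) ∈ [1,N]×[1,N] such that no prime p satisfies p ∣ r and p^b ∣ s tends to 1/ζ(b+1) as N → ∞. -/
open Filter

/-- The Riemann zeta function at a natural number argument, as a real series. -/
noncomputable def zetaR (b : ℕ) : ℝ := ∑' n : ℕ+, (1 : ℝ) / (n : ℝ) ^ b

namespace Stmt5Aux

open Finset ArithmeticFunction
open scoped Classical
open scoped ArithmeticFunction.Moebius ArithmeticFunction.zeta

lemma prime_coprime_prod {a : ℕ} (hap : a.Prime) {T : Finset ℕ}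
    (hTp : ∀ p ∈ T, p.Prime) (ha : a ∉ T) : Nat.Coprime a (∏ p ∈ T, p) := by
  rw [hap.coprime_iff_not_dvd]
  intro hdvd
  obtain ⟨q, hq, hqd⟩ := (Nat.Prime.prime hap).exists_mem_finset_dvd hdvd
  exact ha (((Nat.prime_dvd_prime_iff_eq hap (hTp q hq)).mp hqd) ▸ hq)

lemma squarefree_prod_primes : ∀ {T : Finset ℕ}, (∀ p ∈ T, p.Prime) →
    Squarefree (∏ p ∈ T, p) := by
  intro T
  induction T using Finset.induction with
  | empty => simp [squarefree_one]
  | @insert a T ha ih =>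
    intro hT
    rw [Finset.prod_insert ha]
    have hap : a.Prime := hT a (mem_insert_self a T)
    have hTp : ∀ p ∈ T, p.Prime := fun p hp => hT p (mem_insert_of_mem hp)
    exact Nat.squarefree_mul_iff.mpr
      ⟨prime_coprime_prod hap hTp ha, hap.squarefree, ih hTp⟩

lemma prod_pow_dvd : ∀ {T : Finset ℕ}, (∀ p ∈ T, p.Prime) → ∀ {b s : ℕ},
    (∀ p ∈ T, p ^ b ∣ s) → (∏ p ∈ T, p) ^ b ∣ s := by
  intro T
  induction T using Finset.induction with
  | empty => simp
  | @insert a T ha ih =>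
    intro hT b s h
    have hap : a.Prime := hT a (mem_insert_self a T)
    have hTp : ∀ p ∈ T, p.Prime := fun p hp => hT p (mem_insert_of_mem hp)
    rw [Finset.prod_insert ha, mul_pow]
    exact Nat.Coprime.mul_dvd_of_dvd_of_dvd
      (Nat.Coprime.pow b b (prime_coprime_prod hap hTp ha))
      (h a (mem_insert_self a T)) (ih hTp (fun p hp => h p (mem_insert_of_mem hp)))

lemma pair_sum (b N r s : ℕ) (hr : r ∈ Finset.Icc 1 N) :
    (∑ d ∈ Finset.Icc 1 N, if d ∣ r ∧ d ^ b ∣ s then (μ d : ℤ) else 0) =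
      if ∀ p : ℕ, p.Prime → ¬(p ∣ r ∧ p ^ b ∣ s) then 1 else 0 := by
  rw [Finset.mem_Icc] at hr
  have hr0 : r ≠ 0 := by omega
  set P : Finset ℕ := r.primeFactors.filter (fun p => p ^ b ∣ s) with hPdef
  have hPprime : ∀ p ∈ P, p.Prime := fun p hp =>
    (Nat.mem_primeFactors.mp (Finset.mem_filter.mp hp).1).1
  have hRHS : (∀ p : ℕ, p.Prime → ¬(p ∣ r ∧ p ^ b ∣ s)) ↔ P = ∅ := by
    rw [Finset.filter_eq_empty_iff]
    constructor
    · intro h p hp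
      exact fun hps => h p (Nat.mem_primeFactors.mp hp).1
        ⟨(Nat.mem_primeFactors.mp hp).2.1, hps⟩
    · intro h p hp hc
      exact h (Nat.mem_primeFactors.mpr ⟨hp, hc.1, hr0⟩) hc.2
  rw [if_congr hRHS rfl rfl, ← Finset.sum_powerset_neg_one_pow_card,
    ← Finset.sum_filter]
  rw [← Finset.sum_filter_of_ne (p := fun d => Squarefree d)
    (fun d _ h => moebius_ne_zero_iff_squarefree.mp (fun h0 => h (by simp [h0])))]
  refine Finset.sum_nbij' (fun d => d.primeFactors) (fun T => ∏ p ∈ T, p) ?_ ?_ ?_ ?_ ?_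
  · intro d hd
    simp only [Finset.mem_filter, Finset.mem_Icc] at hd
    obtain ⟨⟨⟨hd1, hdN⟩, hdr, hds⟩, hsq⟩ := hd
    refine Finset.mem_powerset.mpr (fun p hp => ?_)
    have hpd := Nat.mem_primeFactors.mp hp
    refine Finset.mem_filter.mpr ⟨Nat.mem_primeFactors.mpr
      ⟨hpd.1, hpd.2.1.trans hdr, hr0⟩, dvd_trans (pow_dvd_pow_of_dvd hpd.2.1 b) hds⟩
  · intro T hT
    rw [Finset.mem_powerset] at hT
    have hTp : ∀ p ∈ T, p.Prime := fun p hp => hPprime p (hT hp)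
    have hdr : (∏ p ∈ T, p) ∣ r := Finset.prod_primes_dvd r
      (fun p hp => (hTp p hp).prime) (fun p hp =>
        (Nat.mem_primeFactors.mp (Finset.mem_filter.mp (hT hp)).1).2.1)
    have hpos : 0 < ∏ p ∈ T, p := Finset.prod_pos (fun p hp => (hTp p hp).pos)
    simp only [Finset.mem_filter, Finset.mem_Icc]
    exact ⟨⟨⟨hpos, (Nat.le_of_dvd (by omega) hdr).trans hr.2⟩, hdr,
      prod_pow_dvd hTp (fun p hp => (Finset.mem_filter.mp (hT hp)).2)⟩,
      squarefree_prod_primes hTp⟩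
  · intro d hd
    exact Nat.prod_primeFactors_of_squarefree (Finset.mem_filter.mp hd).2
  · intro T hT
    exact Nat.primeFactors_prod (fun p hp => hPprime p (Finset.mem_powerset.mp hT hp))
  · intro d hd
    simp only [Finset.mem_filter] at hd
    have hsq := hd.2
    rw [moebius_apply_of_squarefree hsq]
    congr 1
    rw [← (cardDistinctFactors_eq_cardFactors_iff_squarefree hsq.ne_zero).mpr hsq,
      cardDistinctFactors_apply, ← List.card_toFinset, Nat.toFinset_factors]

lemma count_eq (b N : ℕ) :
    ((((Finset.Icc 1 N) ×ˢ (Finset.Icc 1 N)).filter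
        (fun rs : ℕ × ℕ => ∀ p : ℕ, p.Prime → ¬ (p ∣ rs.1 ∧ p ^ b ∣ rs.2))).card : ℤ) =
      ∑ d ∈ Finset.Icc 1 N, (μ d) * ((N / d) * (N / d ^ b) : ℕ) := by
  rw [Finset.card_filter]
  push_cast
  rw [Finset.sum_congr rfl (fun rs hrs => (pair_sum b N rs.1 rs.2
      (Finset.mem_Icc.mpr (by
        have := (Finset.mem_product.mp hrs).1; rwa [Finset.mem_Icc] at this))).symm),
    Finset.sum_comm]
  refine Finset.sum_congr rfl (fun d _ => ?_)
  rw [← Finset.sum_filter, Finset.sum_const, nsmul_eq_mul,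
    Finset.filter_product (fun r => d ∣ r) (fun s => d ^ b ∣ s), Finset.card_product]
  have h1 : (Finset.Icc 1 N).filter (fun r => d ∣ r) = (Finset.Ioc 0 N).filter (d ∣ ·) := by
    rw [← Finset.Icc_add_one_left_eq_Ioc 0 N, zero_add]
  have h2 : (Finset.Icc 1 N).filter (fun s => d ^ b ∣ s) =
      (Finset.Ioc 0 N).filter (d ^ b ∣ ·) := by
    rw [← Finset.Icc_add_one_left_eq_Ioc 0 N, zero_add]
  rw [h1, h2, Nat.Ioc_filter_dvd_card_eq_div, Nat.Ioc_filter_dvd_card_eq_div]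
  push_cast
  ring

lemma nat_div_div_tendsto (d : ℕ) (hd : 0 < d) :
    Tendsto (fun N : ℕ => ((N / d : ℕ) : ℝ) / N) atTop (nhds (1 / d)) := by
  have h0 : Tendsto (fun N : ℕ => ((N % d : ℕ) : ℝ) / N) atTop (nhds 0) := by
    refine squeeze_zero (fun N => by positivity) (fun N => ?_)
      (tendsto_const_div_atTop_nhds_zero_nat (d : ℝ))
    rcases Nat.eq_zero_or_pos N with rfl | hN
    · simp
    · have hN' : (0 : ℝ) < N := by exact_mod_cast hN
      exact div_le_div_of_nonneg_right (by exact_mod_cast (Nat.mod_lt N hd).le) hN'.le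
  have h1 : Tendsto (fun N : ℕ => (1 - ((N % d : ℕ) : ℝ) / N) / d) atTop
      (nhds ((1 - 0) / d)) := (tendsto_const_nhds.sub h0).div_const d
  rw [sub_zero] at h1
  refine h1.congr' ?_
  filter_upwards [eventually_gt_atTop 0] with N hN
  have hNne : (N : ℝ) ≠ 0 := Nat.cast_ne_zero.mpr hN.ne'
  have hdne : (d : ℝ) ≠ 0 := Nat.cast_ne_zero.mpr hd.ne'
  have key : ((d : ℝ)) * ((N / d : ℕ) : ℝ) + ((N % d : ℕ) : ℝ) = N := by
    exact_mod_cast congrArg (Nat.cast : ℕ → ℝ) (Nat.div_add_mod N d)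
  field_simp
  linear_combination (-1 : ℝ) * key

lemma term_tendsto (b d : ℕ) (hd : 0 < d) :
    Tendsto (fun N : ℕ => (μ d : ℝ) * ((N / d : ℕ) : ℝ) * ((N / d ^ b : ℕ) : ℝ) / (N : ℝ) ^ 2)
      atTop (nhds ((μ d : ℝ) / (d : ℝ) ^ (b + 1))) := by
  have h := (tendsto_const_nhds (x := (μ d : ℝ)).mul (nat_div_div_tendsto d hd)).mul
    (nat_div_div_tendsto (d ^ b) (pow_pos hd b))
  have hval : (μ d : ℝ) * (1 / d) * (1 / ((d ^ b : ℕ) : ℝ)) = (μ d : ℝ) / (d : ℝ) ^ (b + 1) := by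
    push_cast
    rw [pow_succ]
    ring
  rw [hval] at h
  refine h.congr' ?_
  filter_upwards [eventually_gt_atTop 0] with N hN
  ring

lemma summable_mu (b : ℕ) (hb : 1 ≤ b) :
    Summable (fun d : ℕ => (μ d : ℝ) / (d : ℝ) ^ (b + 1)) := by
  refine Summable.of_norm_bounded
    (Real.summable_one_div_nat_pow.mpr (by omega) : Summable fun n : ℕ => 1 / (n : ℝ) ^ (b + 1))
    (fun d => ?_)
  rw [norm_div, norm_pow, Real.norm_natCast]
  rcases Nat.eq_zero_or_pos d with rfl | hd
  · simp
  · gcongr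
    have := abs_moebius_le_one (n := d)
    rw [show ‖((μ d : ℤ) : ℝ)‖ = |((μ d : ℤ) : ℝ)| from rfl]
    exact_mod_cast this

lemma zetaR_eq (b : ℕ) (hb : 1 ≤ b) :
    zetaR b = ∑' n : ℕ, (1 : ℝ) / (n : ℝ) ^ b := by
  rw [zetaR]
  have h := Function.Injective.tsum_eq (g := fun n : ℕ+ => (n : ℕ))
      (f := fun n : ℕ => (1 : ℝ) / (n : ℝ) ^ b)
      (fun a b h => PNat.coe_injective h) ?_
  · exact h.symm ▸ (tsum_congr fun n => by norm_num)
  · intro x hx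
    rcases Nat.eq_zero_or_pos x with rfl | hxpos
    · exfalso
      apply hx
      simp [zero_pow (by omega : b ≠ 0)]
    · exact ⟨⟨x, hxpos⟩, rfl⟩

lemma tsum_mu_eq (b : ℕ) (hb : 1 ≤ b) :
    (∑' d : ℕ, (μ d : ℝ) / (d : ℝ) ^ (b + 1)) = (zetaR (b + 1))⁻¹ := by
  have hs : 1 < ((b + 1 : ℕ) : ℂ).re := by
    rw [Complex.natCast_re]
    exact_mod_cast (by omega : 1 < b + 1)
  have hZ : LSeries (fun n : ℕ => ((ζ n : ℕ) : ℂ)) ((b + 1 : ℕ) : ℂ)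
      = ((∑' n : ℕ, (1 : ℝ) / (n : ℝ) ^ (b + 1) : ℝ) : ℂ) := by
    rw [Complex.ofReal_tsum]
    refine (tsum_congr fun n => ?_).symm
    rcases eq_or_ne n 0 with rfl | hn
    · simp [LSeries.term_zero, zero_pow (by omega : b + 1 ≠ 0)]
    · rw [LSeries.term_of_ne_zero hn, zeta_apply_ne hn, Complex.cpow_natCast]
      push_cast
      norm_num
  have hM : LSeries (fun n : ℕ => ((μ n : ℤ) : ℂ)) ((b + 1 : ℕ) : ℂ)
      = ((∑' d : ℕ, (μ d : ℝ) / (d : ℝ) ^ (b + 1) : ℝ) : ℂ) := by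
    rw [Complex.ofReal_tsum]
    refine (tsum_congr fun n => ?_).symm
    rcases eq_or_ne n 0 with rfl | hn
    · simp [LSeries.term_zero]
    · rw [LSeries.term_of_ne_zero hn, Complex.cpow_natCast]
      push_cast
      norm_num
  have key := ArithmeticFunction.LSeries_zeta_mul_Lseries_moebius hs
  rw [hZ, hM] at key
  have hreal : (∑' n : ℕ, (1 : ℝ) / (n : ℝ) ^ (b + 1)) *
      (∑' d : ℕ, (μ d : ℝ) / (d : ℝ) ^ (b + 1)) = 1 := by exact_mod_cast key
  rw [zetaR_eq (b + 1) (by omega)]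
  exact eq_inv_of_mul_eq_one_right hreal

end Stmt5Aux

open scoped Classical in
/-- The proportion of `b`-visible lattice points in `[1,N]²` (pairs `(r,s)` such that
no prime `p` has `p ∣ r` and `p^b ∣ s`) tends to `1/ζ(b+1)`. -/
theorem stmt5 (b : ℕ) (hb : 1 ≤ b) :
    Tendsto (fun N : ℕ =>
        ((((Finset.Icc 1 N) ×ˢ (Finset.Icc 1 N)).filter
            (fun rs : ℕ × ℕ => ∀ p : ℕ, p.Prime → ¬ (p ∣ rs.1 ∧ p ^ b ∣ rs.2))).card : ℝ)
          / (N : ℝ) ^ 2)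
      atTop (nhds (zetaR (b + 1))⁻¹) := by
  open Stmt5Aux ArithmeticFunction ArithmeticFunction.Moebius in
  classical
  set F : ℕ → ℕ → ℝ := fun N d =>
    if d ∈ Finset.Icc 1 N then
      (μ d : ℝ) * ((N / d : ℕ) : ℝ) * ((N / d ^ b : ℕ) : ℝ) / (N : ℝ) ^ 2
    else 0 with hF
  have hmain : Tendsto (fun N : ℕ => ∑' d : ℕ, F N d) atTop
      (nhds (∑' d : ℕ, (μ d : ℝ) / (d : ℝ) ^ (b + 1))) := by
    refine tendsto_tsum_of_dominated_convergence
      (bound := fun d : ℕ => 1 / (d : ℝ) ^ (b + 1))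
      (Real.summable_one_div_nat_pow.mpr (by omega)) (fun d => ?_) ?_
    · rcases Nat.eq_zero_or_pos d with rfl | hd
      · have h0 : ∀ N, F N 0 = 0 := fun N => by simp [hF]
        simp only [h0, Nat.cast_zero, zero_pow (by omega : b + 1 ≠ 0), div_zero]
        simpa [ArithmeticFunction.map_zero] using (tendsto_const_nhds (x := (0:ℝ)))
      · refine (Stmt5Aux.term_tendsto b d hd).congr' ?_
        filter_upwards [eventually_ge_atTop d] with N hN
        simp only [hF, if_pos (Finset.mem_Icc.mpr ⟨hd, hN⟩)]
    · filter_upwards [eventually_gt_atTop 0] with N hN d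
      simp only [hF]
      split_ifs with hd
      · rw [Finset.mem_Icc] at hd
        have hd1 : 0 < d := hd.1
        have hNne : (N : ℝ) ≠ 0 := Nat.cast_ne_zero.mpr hN.ne'
        have hdne : (d : ℝ) ≠ 0 := Nat.cast_ne_zero.mpr hd1.ne'
        have hab : ((N / d : ℕ) : ℝ) ≤ (N : ℝ) / d := Nat.cast_div_le
        have hcd : ((N / d ^ b : ℕ) : ℝ) ≤ (N : ℝ) / (d ^ b : ℕ) := Nat.cast_div_le
        have hmu : ‖((μ d : ℤ) : ℝ)‖ ≤ 1 := by
          rw [show ‖((μ d : ℤ) : ℝ)‖ = |((μ d : ℤ) : ℝ)| from rfl]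
          exact_mod_cast abs_moebius_le_one (n := d)
        calc ‖(μ d : ℝ) * ((N / d : ℕ) : ℝ) * ((N / d ^ b : ℕ) : ℝ) / (N : ℝ) ^ 2‖
            = ‖((μ d : ℤ) : ℝ)‖ * ((N / d : ℕ) : ℝ) * ((N / d ^ b : ℕ) : ℝ) / (N : ℝ) ^ 2 := by
              rw [norm_div, norm_mul, norm_mul]
              rw [Real.norm_natCast, Real.norm_natCast, norm_pow, Real.norm_natCast]
          _ ≤ 1 * ((N : ℝ) / d) * ((N : ℝ) / (d ^ b : ℕ)) / (N : ℝ) ^ 2 := by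
              gcongr
              all_goals first
                | positivity
                | exact hmu
                | exact hab
                | exact hcd
          _ = 1 / (d : ℝ) ^ (b + 1) := by
              push_cast
              rw [pow_succ]
              field_simp
              ring
      · simp only [norm_zero]
        positivity
  have heq : (fun N : ℕ =>
        ((((Finset.Icc 1 N) ×ˢ (Finset.Icc 1 N)).filter
            (fun rs : ℕ × ℕ => ∀ p : ℕ, p.Prime → ¬ (p ∣ rs.1 ∧ p ^ b ∣ rs.2))).card : ℝ)
          / (N : ℝ) ^ 2) =ᶠ[atTop] (fun N : ℕ => ∑' d : ℕ, F N d) := by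
    filter_upwards [eventually_gt_atTop 0] with N hN
    have hts : (∑' d : ℕ, F N d) = ∑ d ∈ Finset.Icc 1 N, F N d :=
      tsum_eq_sum (fun d hd => by simp only [hF, if_neg hd])
    rw [hts]
    have hcount := Stmt5Aux.count_eq b N
    have hcountR : ((((Finset.Icc 1 N) ×ˢ (Finset.Icc 1 N)).filter
        (fun rs : ℕ × ℕ => ∀ p : ℕ, p.Prime → ¬ (p ∣ rs.1 ∧ p ^ b ∣ rs.2))).card : ℝ) =
        ∑ d ∈ Finset.Icc 1 N, (μ d : ℝ) * (((N / d) * (N / d ^ b) : ℕ) : ℝ) := by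
      have h2 := congrArg (Int.cast : ℤ → ℝ) hcount
      simp only [Int.cast_sum, Int.cast_mul, Int.cast_natCast] at h2
      exact h2
    rw [hcountR, Finset.sum_div]
    refine Finset.sum_congr rfl (fun d hd => ?_)
    simp only [hF, if_pos hd]
    push_cast
    ring
  rw [Stmt5Aux.tsum_mu_eq b hb] at hmain
  exact hmain.congr' heq.symm
end

section
/- Fix coprime positive integers a,b. The proportion of (b/a)-visible points in [N]_a × [N] tends to 1/ζ(b+1): with [N]_a = {1^a, 2^a, …, ⌊N^{1/a}⌋^a}, the fraction of pairs (ℓ^a, s) with 1 ≤ ℓ ≤ ⌊N^{1/a}⌋, 1 ≤ s ≤ N such that no prime p satisfies p ∣ ℓ and p^b ∣ s tends to 1/ζ(b+1) as N → ∞. -/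
open Filter ArithmeticFunction
open scoped LSeries.notation
open scoped ArithmeticFunction.Moebius ArithmeticFunction.zeta

open scoped Classical in
lemma key_ite (b : ℕ) {M N ℓ s : ℕ} (hℓ : ℓ ∈ Finset.Icc 1 M) (hs : s ∈ Finset.Icc 1 N) :
    (if (∀ p : ℕ, p.Prime → ¬ (p ∣ ℓ ∧ p ^ b ∣ s)) then (1:ℤ) else 0)
      = ∑ d ∈ Finset.Icc 1 M, (if d ∣ ℓ ∧ d ^ b ∣ s then μ d else 0) := by
  rw [Finset.mem_Icc] at hℓ hs
  have hℓ0 : ℓ ≠ 0 := by omega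
  have hs0 : s ≠ 0 := by omega
  set t : Finset ℕ := ℓ.primeFactors.filter (fun p => p ^ b ∣ s) with ht_def
  have ht : ∀ p ∈ t, p.Prime := fun p hp =>
    Nat.prime_of_mem_primeFactors (Finset.mem_filter.1 hp).1
  set g : ℕ := ∏ p ∈ t, p with hg_def
  have hmem_t : ∀ p, p ∈ t ↔ p.Prime ∧ p ∣ ℓ ∧ p ^ b ∣ s := by
    intro p
    simp [ht_def, Nat.mem_primeFactors, hℓ0, and_assoc]
  have hgt : g.primeFactors = t := Nat.primeFactors_prod ht
  have hgdvd : g ∣ ℓ :=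
    dvd_trans (Finset.prod_dvd_prod_of_subset _ _ _ (Finset.filter_subset _ _))
      (Nat.prod_primeFactors_dvd ℓ)
  have hgpos : 0 < g := Nat.pos_of_dvd_of_pos hgdvd (by omega)
  have hgM : g ≤ M := le_trans (Nat.le_of_dvd (by omega) hgdvd) hℓ.2
  have hiff : ∀ d : ℕ, Squarefree d → (d ∣ g ↔ d ∣ ℓ ∧ d ^ b ∣ s) := by
    intro d hd
    constructor
    · intro hdg
      refine ⟨hdg.trans hgdvd, ?_⟩
      have hsub : d.primeFactors ⊆ t := hgt ▸ Nat.primeFactors_mono hdg hgpos.ne'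
      rw [← Nat.factorization_le_iff_dvd (pow_ne_zero b hd.ne_zero) hs0]
      intro p
      rw [Nat.factorization_pow]
      simp only [Finsupp.smul_apply, smul_eq_mul]
      by_cases hp : p ∈ d.primeFactors
      · have hpt := hsub hp
        rw [hmem_t] at hpt
        have h1 : d.factorization p ≤ 1 :=
          (Nat.squarefree_iff_factorization_le_one hd.ne_zero).1 hd p
        have h2 : b ≤ s.factorization p :=
          (Nat.Prime.pow_dvd_iff_le_factorization hpt.1 hs0).1 hpt.2.2
        calc b * d.factorization p ≤ b * 1 := Nat.mul_le_mul_left _ h1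
          _ ≤ s.factorization p := by omega
      · have : d.factorization p = 0 := by
          rw [← Finsupp.notMem_support_iff, Nat.support_factorization]
          exact hp
        simp [this]
    · rintro ⟨hdl, hdbs⟩
      rw [← Nat.prod_primeFactors_of_squarefree hd]
      apply Finset.prod_dvd_prod_of_subset
      intro p hp
      have hpp : p.Prime := Nat.prime_of_mem_primeFactors hp
      have hpd : p ∣ d := Nat.dvd_of_mem_primeFactors hp
      rw [hmem_t]
      exact ⟨hpp, hpd.trans hdl, dvd_trans (pow_dvd_pow_of_dvd hpd b) hdbs⟩
  have hstep : ∀ d ∈ Finset.Icc 1 M,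
      (if d ∣ ℓ ∧ d ^ b ∣ s then (μ d : ℤ) else 0) = (if d ∣ g then (μ d : ℤ) else 0) := by
    intro d _
    by_cases hd : Squarefree d
    · rw [if_congr ((hiff d hd).symm) rfl rfl]
    · have : μ d = 0 := moebius_eq_zero_of_not_squarefree hd
      simp [this]
  rw [Finset.sum_congr rfl hstep, ← Finset.sum_filter]
  have hset : (Finset.Icc 1 M).filter (fun d => d ∣ g) = g.divisors := by
    ext d
    simp only [Finset.mem_filter, Finset.mem_Icc, Nat.mem_divisors]
    constructor
    · rintro ⟨_, hdg⟩; exact ⟨hdg, hgpos.ne'⟩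
    · rintro ⟨hdg, _⟩
      exact ⟨⟨Nat.pos_of_dvd_of_pos hdg hgpos, le_trans (Nat.le_of_dvd hgpos hdg) hgM⟩, hdg⟩
  rw [hset]
  have hsum : ∑ d ∈ g.divisors, (μ d : ℤ) = if g = 1 then 1 else 0 := by
    have h1 : ((μ * (ζ : ArithmeticFunction ℤ)) g : ℤ) = ∑ d ∈ g.divisors, μ d :=
      coe_mul_zeta_apply
    rw [moebius_mul_coe_zeta] at h1
    rw [← h1, one_apply]
  rw [hsum]
  have hcond : (∀ p : ℕ, p.Prime → ¬ (p ∣ ℓ ∧ p ^ b ∣ s)) ↔ g = 1 := by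
    constructor
    · intro hP
      have htemp : t = ∅ := by
        rw [Finset.eq_empty_iff_forall_notMem]
        intro p hp
        rw [hmem_t] at hp
        exact hP p hp.1 hp.2
      rw [hg_def, htemp, Finset.prod_empty]
    · intro hg1 p hp ⟨h1, h2⟩
      have : p ∈ t := (hmem_t p).2 ⟨hp, h1, h2⟩
      have hpg : p ∣ g := Finset.dvd_prod_of_mem _ this
      rw [hg1, Nat.dvd_one] at hpg
      exact hp.ne_one hpg
  rw [if_congr hcond rfl rfl]

open scoped Classical in
lemma countV (b M N : ℕ) :
    ((((Finset.Icc 1 M) ×ˢ (Finset.Icc 1 N)).filter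
        (fun ℓs : ℕ × ℕ => ∀ p : ℕ, p.Prime → ¬ (p ∣ ℓs.1 ∧ p ^ b ∣ ℓs.2))).card : ℤ)
      = ∑ d ∈ Finset.Icc 1 M, (μ d : ℤ) * (M / d : ℕ) * (N / d ^ b : ℕ) := by
  rw [Finset.card_filter]
  push_cast
  have h1 : ∀ x ∈ (Finset.Icc 1 M) ×ˢ (Finset.Icc 1 N),
      (if (∀ p : ℕ, p.Prime → ¬ (p ∣ x.1 ∧ p ^ b ∣ x.2)) then (1:ℤ) else 0)
        = ∑ d ∈ Finset.Icc 1 M, (if d ∣ x.1 ∧ d ^ b ∣ x.2 then (μ d : ℤ) else 0) := by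
    rintro ⟨ℓ, s⟩ hx
    rw [Finset.mem_product] at hx
    exact key_ite b hx.1 hx.2
  rw [Finset.sum_congr rfl h1, Finset.sum_comm]
  refine Finset.sum_congr rfl fun d _ => ?_
  have h2 : ∀ x : ℕ × ℕ, (if d ∣ x.1 ∧ d ^ b ∣ x.2 then (μ d : ℤ) else 0)
      = (μ d : ℤ) * (if d ∣ x.1 ∧ d ^ b ∣ x.2 then 1 else 0) := by
    intro x; split <;> simp
  simp_rw [h2, ← Finset.mul_sum, ← Finset.sum_filter]
  rw [Finset.filter_product, Finset.sum_const, Finset.card_product]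
  have hIoc : ∀ K : ℕ, Finset.Icc 1 K = Finset.Ioc 0 K := by
    intro K; ext x; simp [Nat.lt_iff_add_one_le]
  have hM : ((Finset.Icc 1 M).filter (fun x => d ∣ x)).card = M / d := by
    rw [hIoc]; exact Nat.Ioc_filter_dvd_card_eq_div M d
  have hN : ((Finset.Icc 1 N).filter (fun x => d ^ b ∣ x)).card = N / d ^ b := by
    rw [hIoc]; exact Nat.Ioc_filter_dvd_card_eq_div N (d ^ b)
  rw [hM, hN]
  simp only [nsmul_eq_mul, mul_one]
  push_cast
  ring

lemma zetaR_eq (b : ℕ) (hb : 0 < b) : zetaR b = ∑' n : ℕ, (1 : ℝ) / (n : ℝ) ^ b := by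
  rw [zetaR]
  refine Function.Injective.tsum_eq (f := fun n : ℕ => (1 : ℝ) / (n : ℝ) ^ b)
    (g := fun n : ℕ+ => (n : ℕ)) PNat.coe_injective ?_
  intro x hx
  rcases Nat.eq_zero_or_pos x with rfl | hxpos
  · simp [Function.mem_support, zero_pow hb.ne'] at hx
  · exact ⟨⟨x, hxpos⟩, rfl⟩

lemma zetaR_pos (b : ℕ) (hb : 1 < b) : 0 < zetaR b := by
  have hsum : Summable (fun n : ℕ+ => (1:ℝ)/(n:ℝ)^b) := by
    have h := (Real.summable_one_div_nat_pow (p := b)).mpr ?_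
    · exact h.comp_injective PNat.coe_injective
    · exact hb
  refine Summable.tsum_pos hsum (fun n => by positivity) 1 ?_
  norm_num

lemma moebius_tsum (b : ℕ) (hb : 1 < b) :
    ∑' d : ℕ, ((μ d : ℤ) : ℝ) / (d : ℝ) ^ b = (zetaR b)⁻¹ := by
  have hs : 1 < ((b : ℂ)).re := by
    simp only [Complex.natCast_re]
    exact_mod_cast hb
  have hterm_z : ∀ n : ℕ, LSeries.term (↗ζ) (b : ℂ) n = (((1:ℝ)/(n:ℝ)^b : ℝ) : ℂ) := by
    intro n
    rcases eq_or_ne n 0 with rfl | hn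
    · simp [LSeries.term_zero, zero_pow (by omega : b ≠ 0)]
    · rw [LSeries.term_of_ne_zero hn]
      rw [Complex.cpow_natCast]
      simp [zeta_apply_ne hn]
  have hterm_m : ∀ n : ℕ, LSeries.term (↗μ) (b : ℂ) n = ((((μ n : ℤ):ℝ)/(n:ℝ)^b : ℝ) : ℂ) := by
    intro n
    rcases eq_or_ne n 0 with rfl | hn
    · simp [LSeries.term_zero]
    · rw [LSeries.term_of_ne_zero hn]
      rw [Complex.cpow_natCast]
      push_cast
      ring
  have hZ : LSeries (↗ζ) (b : ℂ) = ((zetaR b : ℝ) : ℂ) := by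
    rw [LSeries, zetaR_eq b (by omega), Complex.ofReal_tsum]
    exact tsum_congr hterm_z
  have hMu : LSeries (↗μ) (b : ℂ) = ((∑' d : ℕ, ((μ d : ℤ) : ℝ) / (d : ℝ) ^ b : ℝ) : ℂ) := by
    rw [LSeries, Complex.ofReal_tsum]
    exact tsum_congr hterm_m
  have hmain := LSeries_zeta_mul_Lseries_moebius (s := (b : ℂ)) hs
  rw [hZ, hMu, ← Complex.ofReal_mul, ← Complex.ofReal_one] at hmain
  have hmul : zetaR b * (∑' d : ℕ, ((μ d : ℤ) : ℝ) / (d : ℝ) ^ b) = 1 :=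
    Complex.ofReal_injective hmain
  exact (inv_eq_of_mul_eq_one_right hmul).symm

lemma aux_div_le (n k : ℕ) (hk : 0 < k) : ((n / k : ℕ) : ℝ) / (n : ℝ) ≤ 1 / (k : ℝ) := by
  have hk' : (0:ℝ) < k := by exact_mod_cast hk
  rcases Nat.eq_zero_or_pos n with rfl | hn
  · simp
  · have hn' : (0:ℝ) < n := by exact_mod_cast hn
    have h2 : ((n/k:ℕ):ℝ) ≤ (n:ℝ)/k := Nat.cast_div_le
    calc ((n / k : ℕ) : ℝ) / (n : ℝ) ≤ ((n:ℝ)/k)/n := by gcongr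
      _ = 1/k := by field_simp

lemma aux_div_tendsto (k : ℕ) (hk : 0 < k) :
    Filter.Tendsto (fun n : ℕ => ((n / k : ℕ) : ℝ) / (n : ℝ)) atTop (nhds (1 / (k:ℝ))) := by
  have hk' : (0:ℝ) < k := by exact_mod_cast hk
  apply tendsto_of_tendsto_of_tendsto_of_le_of_le'
    (g := fun n : ℕ => 1/(k:ℝ) - 1/(n:ℝ)) (h := fun _ : ℕ => 1/(k:ℝ))
  · simpa using tendsto_const_nhds.sub (tendsto_one_div_atTop_nhds_zero_nat (𝕜 := ℝ))
  · exact tendsto_const_nhds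
  · filter_upwards [eventually_ge_atTop 1] with n hn
    have hn' : (0:ℝ) < n := by exact_mod_cast hn
    have hnat : n < k * (n / k) + k := by
      have h1 := Nat.div_add_mod n k
      have h2 := Nat.mod_lt n hk
      omega
    have hcast : (n:ℝ) < k * ((n/k:ℕ):ℝ) + k := by exact_mod_cast hnat
    have key : (n:ℝ)/k - 1 ≤ ((n/k:ℕ):ℝ) := by
      rw [sub_le_iff_le_add, div_le_iff₀ hk']
      nlinarith
    have heq : 1/(k:ℝ) - 1/(n:ℝ) = ((n:ℝ)/k - 1)/n := by
      field_simp
    rw [heq]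
    gcongr
  · filter_upwards with n
    exact aux_div_le n k hk


open scoped Classical in
/-- With `M = ⌊N^{1/a}⌋`, the proportion of pairs `(ℓ, s)` with `1 ≤ ℓ ≤ M`,
`1 ≤ s ≤ N` such that no prime `p` satisfies `p ∣ ℓ` and `p^b ∣ s` (i.e. the
proportion of `(b/a)`-visible points `(ℓ^a, s)` in `[N]_a × [N]`) tends to
`1/ζ(b+1)`. -/
theorem stmt6 (a b : ℕ) (ha : 0 < a) (hb : 0 < b) (hab : Nat.gcd a b = 1) :
    Tendsto (fun N : ℕ =>
        ((((Finset.Icc 1 (⌊(N : ℝ) ^ ((a : ℝ)⁻¹)⌋₊)) ×ˢ (Finset.Icc 1 N)).filter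
            (fun ℓs : ℕ × ℕ => ∀ p : ℕ, p.Prime → ¬ (p ∣ ℓs.1 ∧ p ^ b ∣ ℓs.2))).card : ℝ)
          / ((⌊(N : ℝ) ^ ((a : ℝ)⁻¹)⌋₊ : ℝ) * N))
      atTop (nhds (zetaR (b + 1))⁻¹) := by
  set M : ℕ → ℕ := fun N => ⌊(N : ℝ) ^ ((a : ℝ)⁻¹)⌋₊ with hM_def
  have hMtop : Filter.Tendsto M atTop atTop := by
    apply tendsto_nat_floor_atTop.comp
    exact (tendsto_rpow_atTop (by positivity : (0:ℝ) < (a:ℝ)⁻¹)).comp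
      tendsto_natCast_atTop_atTop
  set f : ℕ → ℕ → ℝ := fun N d =>
    if d ∈ Finset.Icc 1 (M N) then
      ((μ d : ℤ) : ℝ) * (((M N / d : ℕ) : ℝ) / (M N : ℝ)) * (((N / d ^ b : ℕ) : ℝ) / (N : ℝ))
    else 0 with hf_def
  have habs : ∀ d : ℕ, |((μ d : ℤ) : ℝ)| ≤ 1 := by
    intro d
    have := abs_moebius_le_one (n := d)
    calc |((μ d : ℤ) : ℝ)| = ((|μ d| : ℤ) : ℝ) := by push_cast; ring
      _ ≤ 1 := by exact_mod_cast this
  have hbound : ∀ N d, ‖f N d‖ ≤ 1 / (d : ℝ) ^ (b + 1) := by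
    intro N d
    rw [Real.norm_eq_abs]
    simp only [hf_def]
    split
    · rename_i hd
      rw [Finset.mem_Icc] at hd
      have hd1 : 0 < d := hd.1
      have hd' : (0:ℝ) < d := by exact_mod_cast hd1
      rw [abs_mul, abs_mul]
      have hA : |(((M N / d : ℕ) : ℝ) / (M N : ℝ))| ≤ 1/(d:ℝ) := by
        rw [abs_of_nonneg (by positivity)]
        exact aux_div_le (M N) d hd1
      have hB : |(((N / d ^ b : ℕ) : ℝ) / (N : ℝ))| ≤ 1/(d:ℝ)^b := by
        rw [abs_of_nonneg (by positivity)]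
        have := aux_div_le N (d^b) (pow_pos hd1 b)
        push_cast at this
        exact this
      calc |((μ d : ℤ) : ℝ)| * |(((M N / d : ℕ) : ℝ) / (M N : ℝ))|
            * |(((N / d ^ b : ℕ) : ℝ) / (N : ℝ))|
          ≤ 1 * (1/(d:ℝ)) * (1/(d:ℝ)^b) := by
            gcongr <;> first | exact habs d | exact hA | exact hB
        _ = 1 / (d : ℝ) ^ (b + 1) := by
            rw [one_mul, div_mul_div_comm, one_mul, ← pow_succ']
    · simp only [abs_zero]
      positivity
  have hlim : ∀ d : ℕ, Filter.Tendsto (fun N => f N d) atTop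
      (nhds (((μ d : ℤ) : ℝ) / (d : ℝ) ^ (b + 1))) := by
    intro d
    rcases Nat.eq_zero_or_pos d with rfl | hd
    · have h0 : (fun N => f N 0) = fun _ : ℕ => (0:ℝ) := by
        funext N
        simp only [hf_def]
        rw [if_neg (by simp)]
      rw [h0]
      have hval0 : ((μ 0 : ℤ) : ℝ) / ((0:ℕ) : ℝ) ^ (b + 1) = 0 := by simp
      rw [hval0]
      exact tendsto_const_nhds
    · have hd' : (0:ℝ) < d := by exact_mod_cast hd
      have hA : Filter.Tendsto (fun N => ((M N / d : ℕ) : ℝ) / (M N : ℝ)) atTop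
          (nhds (1/(d:ℝ))) := (aux_div_tendsto d hd).comp hMtop
      have hB : Filter.Tendsto (fun N : ℕ => ((N / d ^ b : ℕ) : ℝ) / (N : ℝ)) atTop
          (nhds (1/(d:ℝ)^b)) := by
        have := aux_div_tendsto (d^b) (pow_pos hd b)
        push_cast at this
        exact this
      have hprod := (tendsto_const_nhds (x := ((μ d : ℤ) : ℝ)).mul hA).mul hB
      have hval : ((μ d : ℤ) : ℝ) * (1/(d:ℝ)) * (1/(d:ℝ)^b)
          = ((μ d : ℤ) : ℝ) / (d : ℝ) ^ (b + 1) := by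
        rw [pow_succ']
        field_simp
      rw [hval] at hprod
      refine hprod.congr' ?_
      filter_upwards [hMtop.eventually_ge_atTop d] with N hN
      simp only [hf_def]
      rw [if_pos (Finset.mem_Icc.2 ⟨hd, hN⟩)]
  have hsummable : Summable (fun d : ℕ => 1 / (d:ℝ)^(b+1)) :=
    Real.summable_one_div_nat_pow.mpr (by omega)
  have hT := tendsto_tsum_of_dominated_convergence (𝓕 := atTop) hsummable hlim
    (Filter.Eventually.of_forall (fun N d => hbound N d))
  rw [moebius_tsum (b+1) (by omega)] at hT
  refine hT.congr' ?_
  filter_upwards [hMtop.eventually_ge_atTop 1, eventually_ge_atTop 1] with N hMN hN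
  have hM0 : (M N : ℝ) ≠ 0 := by
    have : (0:ℕ) < M N := hMN
    positivity
  have hN0 : (N : ℝ) ≠ 0 := by
    have : (0:ℕ) < N := hN
    positivity
  have hcard := countV b (M N) N
  have hcardR : (((((Finset.Icc 1 (M N)) ×ˢ (Finset.Icc 1 N)).filter
        (fun ℓs : ℕ × ℕ => ∀ p : ℕ, p.Prime → ¬ (p ∣ ℓs.1 ∧ p ^ b ∣ ℓs.2))).card : ℕ) : ℝ)
      = ∑ d ∈ Finset.Icc 1 (M N),
          ((μ d : ℤ) : ℝ) * ((M N / d : ℕ) : ℝ) * ((N / d ^ b : ℕ) : ℝ) := by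
    have hcomp : (((((Finset.Icc 1 (M N)) ×ˢ (Finset.Icc 1 N)).filter
        (fun ℓs : ℕ × ℕ => ∀ p : ℕ, p.Prime → ¬ (p ∣ ℓs.1 ∧ p ^ b ∣ ℓs.2))).card : ℕ) : ℝ)
        = ((((((Finset.Icc 1 (M N)) ×ˢ (Finset.Icc 1 N)).filter
        (fun ℓs : ℕ × ℕ => ∀ p : ℕ, p.Prime → ¬ (p ∣ ℓs.1 ∧ p ^ b ∣ ℓs.2))).card : ℕ) : ℤ) : ℝ) := by
      simp
    rw [hcomp, hcard]
    simp only [Int.cast_sum, Int.cast_mul, Int.cast_natCast]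
  rw [show ⌊(N : ℝ) ^ ((a : ℝ)⁻¹)⌋₊ = M N from rfl]
  rw [tsum_eq_sum (s := Finset.Icc 1 (M N))
      (fun d hd => by simp only [hf_def]; rw [if_neg hd])]
  rw [hcardR, Finset.sum_div]
  refine Finset.sum_congr rfl fun d hd => ?_
  simp only [hf_def]
  rw [if_pos hd]
  field_simp
end

section
/- Fix coprime positive integers a,b with a ≥ 2. The natural density (within [1,N]×[1,N]) of points (r,s) with r a perfect a-th power is 0; hence the set of (b/a)-visible points has density 0 in ℕ×ℕ. -/
open Filter

open scoped Classical in
/-- For `a ≥ 2`, any set of lattice points whose first coordinates are perfect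
`a`-th powers has natural density `0` in `[1,N]²`; in particular the set of
`(b/a)`-visible points has density `0` in `ℕ × ℕ`. -/
theorem stmt9 (a b : ℕ) (ha : 2 ≤ a) (hb : 0 < b) (hab : Nat.gcd a b = 1)
    (S : Set (ℕ × ℕ)) (hS : ∀ q ∈ S, ∃ ℓ : ℕ, q.1 = ℓ ^ a) :
    Tendsto (fun N : ℕ =>
        ((((Finset.Icc 1 N) ×ˢ (Finset.Icc 1 N)).filter (fun q : ℕ × ℕ => q ∈ S)).card : ℝ)
          / (N : ℝ) ^ 2)
      atTop (nhds 0) := by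
  have key : ∀ N : ℕ,
      ((((Finset.Icc 1 N) ×ˢ (Finset.Icc 1 N)).filter (fun q : ℕ × ℕ => q ∈ S)).card : ℝ)
        ≤ (Nat.sqrt N : ℝ) * N := by
    intro N
    have hsub : (((Finset.Icc 1 N) ×ˢ (Finset.Icc 1 N)).filter (fun q : ℕ × ℕ => q ∈ S)) ⊆
        ((Finset.Icc 1 (Nat.sqrt N)).image (fun ℓ => ℓ ^ a)) ×ˢ (Finset.Icc 1 N) := by
      intro q hq
      simp only [Finset.mem_filter, Finset.mem_product, Finset.mem_Icc] at hq
      obtain ⟨⟨⟨h1, h2⟩, h3, h4⟩, hqS⟩ := hq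
      obtain ⟨ℓ, hℓ⟩ := hS q hqS
      have hℓ1 : 1 ≤ ℓ := by
        rcases Nat.eq_zero_or_pos ℓ with h | h
        · exfalso; subst h
          rw [Nat.zero_pow (by omega)] at hℓ; omega
        · exact h
      have hℓ2 : ℓ * ℓ ≤ N := by
        have : ℓ ^ 2 ≤ ℓ ^ a := Nat.pow_le_pow_right hℓ1 ha
        have := le_trans this (hℓ ▸ h2)
        nlinarith [this]
      refine Finset.mem_product.2 ⟨Finset.mem_image.2 ⟨ℓ, Finset.mem_Icc.2
        ⟨hℓ1, Nat.le_sqrt.2 hℓ2⟩, hℓ.symm⟩, Finset.mem_Icc.2 ⟨h3, h4⟩⟩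
    calc ((((Finset.Icc 1 N) ×ˢ (Finset.Icc 1 N)).filter (fun q : ℕ × ℕ => q ∈ S)).card : ℝ)
        ≤ (((Finset.Icc 1 (Nat.sqrt N)).image (fun ℓ => ℓ ^ a)) ×ˢ (Finset.Icc 1 N)).card := by
          exact_mod_cast Finset.card_le_card hsub
      _ ≤ (Nat.sqrt N : ℝ) * N := by
          rw [Finset.card_product]
          push_cast
          gcongr
          · exact_mod_cast (Finset.card_image_le.trans (by simp))
          · simp
  have hsqrt : Tendsto (fun N : ℕ => (Nat.sqrt N : ℝ)) atTop atTop := by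
    have : Tendsto Nat.sqrt atTop atTop :=
      tendsto_atTop_atTop.2 fun b => ⟨b * b, fun n hn => Nat.le_sqrt.2 hn⟩
    exact tendsto_natCast_atTop_atTop.comp this
  have hub : Tendsto (fun N : ℕ => (Nat.sqrt N : ℝ) * N / (N : ℝ) ^ 2) atTop (nhds 0) := by
    have h1 : Tendsto (fun N : ℕ => 1 / (Nat.sqrt N : ℝ)) atTop (nhds 0) :=
      tendsto_one_div_atTop_nhds_zero_nat.comp
        (tendsto_atTop_atTop.2 fun b => ⟨b * b, fun n hn => Nat.le_sqrt.2 hn⟩)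
    apply squeeze_zero (fun N => by positivity) _ h1
    intro N
    rcases Nat.eq_zero_or_pos N with h | h
    · simp [h]
    have hs : (0:ℝ) < Nat.sqrt N := by
      have : 1 ≤ Nat.sqrt N := Nat.le_sqrt.2 (by omega)
      exact_mod_cast this
    have hNpos : (0:ℝ) < N := by exact_mod_cast h
    rw [div_le_div_iff₀ (by positivity) hs]
    have hsq : (Nat.sqrt N : ℝ) * Nat.sqrt N ≤ N := by
      have := Nat.sqrt_le' N; exact_mod_cast Nat.pow_two N.sqrt ▸ this
    nlinarith [hsq, hNpos, hs]
  apply squeeze_zero (fun N => by positivity) _ hub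
  intro N
  gcongr
  exact key N
end

section
/- Let b ≥ 1 and suppose positive integers r, s, r', s' satisfy s'·r^b = s·(r')^b with r' < r. Then there exists a prime p such that p ∣ r and p^b ∣ s. -/
/-- If positive integers `r, s, r', s'` satisfy `s' * r^b = s * (r')^b` with
`r' < r`, then some prime `p` divides `r` with `p^b` dividing `s`. -/
theorem stmt11 (b r s r' s' : ℕ) (hb : 1 ≤ b) (hr : 0 < r) (hs : 0 < s)
    (hr' : 0 < r') (hs' : 0 < s') (h : s' * r ^ b = s * r' ^ b) (hlt : r' < r) :
    ∃ p : ℕ, p.Prime ∧ p ∣ r ∧ p ^ b ∣ s := by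
  set d := Nat.gcd r r' with hd
  have hd0 : 0 < d := Nat.gcd_pos_of_pos_left _ hr
  set β := r / d with hβ
  set α := r' / d with hα
  have hco : Nat.Coprime β α := Nat.coprime_div_gcd_div_gcd hd0
  have hrβ : r = d * β := by
    rw [hβ, Nat.mul_div_cancel' (Nat.gcd_dvd_left r r')]
  have hrα : r' = d * α := by
    rw [hα, Nat.mul_div_cancel' (Nat.gcd_dvd_right r r')]
  have hαβ : α < β := by
    have := hlt
    rw [hrβ, hrα] at this
    exact lt_of_mul_lt_mul_left this (Nat.zero_le d)
  have hβ2 : 2 ≤ β := by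
    have hα1 : 1 ≤ α := by
      rcases Nat.eq_zero_or_pos α with h0 | h1
      · rw [h0, Nat.mul_zero] at hrα; omega
      · exact h1
    omega
  have hkey : s' * β ^ b = s * α ^ b := by
    have h2 : s' * (d ^ b * β ^ b) = s * (d ^ b * α ^ b) := by
      rw [← mul_pow, ← mul_pow, ← hrβ, ← hrα]; exact h
    have hdb : 0 < d ^ b := Nat.pow_pos hd0
    nlinarith [h2]
  have hdvd : β ^ b ∣ s := by
    have : β ^ b ∣ s * α ^ b := ⟨s', by rw [← hkey]; ring⟩
    exact ((Nat.Coprime.symm hco).pow b b : Nat.Coprime (α^b) (β^b)).symm.dvd_of_dvd_mul_right this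
  obtain ⟨p, hp, hpβ⟩ := Nat.exists_prime_and_dvd (by omega : β ≠ 1)
  exact ⟨p, hp, dvd_trans hpβ ⟨d, by rw [hrβ]; ring⟩,
    dvd_trans (pow_dvd_pow_of_dvd hpβ b) hdvd⟩
end

section
/- Fix coprime positive integers a, b, and let b ≥ 1. A point (ℓ^a, s) with ℓ, s ≥ 1 is (−b/a)-visible (from (∞,0)) if and only if (ℓ, s) is (−b)-visible, i.e., if and only if s is b-th-power-free. -/
/-- A point `(ℓ^a, s)` is `(-b/a)`-visible from `(∞,0)` iff `(ℓ, s)` is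
`(-b)`-visible, iff `s` is `b`-th-power-free. Visibility is encoded by the
nonexistence of a positive integer point `((ℓ')^a, s')` (resp. `(ℓ', s')`) beyond the
given point on the same curve, via `s' * (ℓ')^b = s * ℓ^b`. -/
theorem stmt14 (a b ℓ s : ℕ) (ha : 0 < a) (hb : 0 < b) (hab : Nat.gcd a b = 1)
    (hℓ : 0 < ℓ) (hs : 0 < s) :
    ((¬ ∃ ℓ' s' : ℕ, 0 < ℓ' ∧ 0 < s' ∧ ℓ ^ a < ℓ' ^ a ∧ s' * ℓ' ^ b = s * ℓ ^ b) ↔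
      (¬ ∃ ℓ' s' : ℕ, 0 < ℓ' ∧ 0 < s' ∧ ℓ < ℓ' ∧ s' * ℓ' ^ b = s * ℓ ^ b)) ∧
    ((¬ ∃ ℓ' s' : ℕ, 0 < ℓ' ∧ 0 < s' ∧ ℓ < ℓ' ∧ s' * ℓ' ^ b = s * ℓ ^ b) ↔
      ∀ p : ℕ, p.Prime → ¬ p ^ b ∣ s) := by
  constructor
  · have hpow : ∀ ℓ' : ℕ, ℓ ^ a < ℓ' ^ a ↔ ℓ < ℓ' := fun ℓ' =>
      Nat.pow_lt_pow_iff_left ha.ne'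
    simp only [hpow]
  · constructor
    · intro h p hp hdvd
      obtain ⟨t, ht⟩ := hdvd
      have htpos : 0 < t := by
        rcases Nat.eq_zero_or_pos t with h0 | h0
        · subst h0; simp at ht; omega
        · exact h0
      exact h ⟨p * ℓ, t, Nat.mul_pos hp.pos hℓ, htpos,
        lt_mul_of_one_lt_left hℓ hp.one_lt |>.trans_eq (by ring_nf),
        by rw [ht]; ring⟩
    · rintro h ⟨ℓ', s', hℓ', hs', hlt, heq⟩
      have hnd : ¬ ℓ' ∣ ℓ := fun hd => absurd (Nat.le_of_dvd hℓ hd) (not_le.mpr hlt)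
      have : ¬ ∀ p, ℓ'.factorization p ≤ ℓ.factorization p := by
        intro hall
        exact hnd ((Nat.factorization_le_iff_dvd hℓ'.ne' hℓ.ne').mp hall)
      push_neg at this
      obtain ⟨p, hp⟩ := this
      have hppr : p.Prime := by
        by_contra hnp
        simp [Nat.factorization_eq_zero_of_not_prime _ hnp] at hp
      have hfeq : s'.factorization p + b * ℓ'.factorization p
          = s.factorization p + b * ℓ.factorization p := by
        have := congrArg (fun n => n.factorization p) heq
        simpa [Nat.factorization_mul hs'.ne' (by positivity : (ℓ' ^ b : ℕ) ≠ 0),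
          Nat.factorization_mul hs.ne' (by positivity : (ℓ ^ b : ℕ) ≠ 0),
          Nat.factorization_pow] using this
      have hbs : b ≤ s.factorization p := by nlinarith [Nat.zero_le (s'.factorization p)]
      exact h p hppr ((Nat.Prime.pow_dvd_iff_le_factorization hppr hs.ne').mpr hbs)
end
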